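/- arXiv:2605.14561 — 2 statements merged into one kernel-verified Lean document; each statement's English description precedes it below -/
import Mathlib

section
/- Let α be a type and P a list over α. Let S₁ = [t_1,…,t_k] be a segmentation of P and let S₂ be a segmentation of P that refines S₁, i.e. S₂ is the concatenation b_1 ++ ⋯ ++ b_k of nonempty lists of segments b_i such that the concatenation of the segments in b_i equals t_i for each i. Then for every annotation assignment (a_1,…,a_k) for S₁ there exists an annotation assignment a′ for S₂, using only the values a_1,…,a_k and the empty list, such that the annotated prompt J(S₂, a′) equals the annotated prompt J(S₁, (a_1,…,a_k)). (Replication construction in the proof of Theorem 3: assign a_i to the last subsegment of block b_i and the empty annotation to all other subsegments.) -/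
/-- A segmentation of a list `P` over `α`: a list of nonempty lists whose
concatenation equals `P`. -/
def IsSegmentation {α : Type*} (σ : List (List α)) (P : List α) : Prop :=
  σ.flatten = P ∧ ∀ s ∈ σ, s ≠ []

/-- The annotated prompt `J(σ, a) = s₁ ++ a₁ ++ s₂ ++ a₂ ++ ⋯ ++ sₙ ++ aₙ`
obtained by interleaving the segments of `σ` with the annotations of `a`. -/
def annotatedPrompt {α : Type*} (σ a : List (List α)) : List α :=
  ((σ.zip a).map fun p => p.1 ++ p.2).flatten

/-! Within a block `b` refining the segment `b.flatten`, the annotation `x` of that segment is put on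
the last subsegment of `b` and `[]` on the others; the annotated prompt of the block is then
`b.flatten ++ x`. Doing this block by block and concatenating, the annotated prompt of the refined
segmentation is that of the coarse one, since `annotatedPrompt` turns concatenations of
equal-length lists into concatenations. -/

section

open List

variable {α : Type*}

@[simp]
lemma annotatedPrompt_nil_right (σ : List (List α)) : annotatedPrompt σ [] = [] := by
  simp [annotatedPrompt]

@[simp]
lemma annotatedPrompt_cons_cons (s x : List α) (σ a : List (List α)) :
    annotatedPrompt (s :: σ) (x :: a) = s ++ x ++ annotatedPrompt σ a := by
  simp [annotatedPrompt]

lemma annotatedPrompt_append {σ₁ a₁ : List (List α)} (σ₂ a₂ : List (List α))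
    (h : σ₁.length = a₁.length) :
    annotatedPrompt (σ₁ ++ σ₂) (a₁ ++ a₂) = annotatedPrompt σ₁ a₁ ++ annotatedPrompt σ₂ a₂ := by
  rw [annotatedPrompt, zip_append h, map_append, flatten_append]
  rfl

lemma annotatedPrompt_replicate_nil (σ : List (List α)) :
    annotatedPrompt σ (replicate σ.length []) = σ.flatten := by
  induction σ with
  | nil => rfl
  | cons s σ ih => simp [replicate_succ, ih]

def annotateLast (b : List (List α)) (x : List α) : List (List α) :=
  replicate (b.length - 1) [] ++ [x]

lemma length_annotateLast {b : List (List α)} (hb : b ≠ []) (x : List α) :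
    (annotateLast b x).length = b.length := by
  have := length_pos_iff.2 hb
  simp only [annotateLast, length_append, length_replicate, length_singleton]
  omega

lemma annotatedPrompt_annotateLast {b : List (List α)} (hb : b ≠ []) (x : List α) :
    annotatedPrompt b (annotateLast b x) = b.flatten ++ x := by
  obtain ⟨init, s, rfl⟩ : ∃ init s, b = init ++ [s] :=
    ⟨b.dropLast, b.getLast hb, (dropLast_append_getLast hb).symm⟩
  have hlen : (init ++ [s]).length - 1 = init.length := by simp
  rw [annotateLast, hlen, annotatedPrompt_append _ _ (length_replicate ..).symm,
    annotatedPrompt_replicate_nil]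
  simp

def replicateAnnotation (B : List (List (List α))) (a : List (List α)) : List (List α) :=
  (zipWith annotateLast B a).flatten

lemma length_replicateAnnotation {B : List (List (List α))} (hB : ∀ b ∈ B, b ≠ [])
    {a : List (List α)} (ha : a.length = B.length) :
    (replicateAnnotation B a).length = B.flatten.length := by
  induction B generalizing a with
  | nil => simp [replicateAnnotation]
  | cons b B ih =>
    obtain _ | ⟨x, a⟩ := a
    · simp at ha
    have hBtail : ∀ b ∈ B, b ≠ [] := fun b' hb' => hB b' (mem_cons_of_mem _ hb')
    have ih := ih hBtail (a := a) (by simpa using ha)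
    simp only [replicateAnnotation] at ih ⊢
    rw [zipWith_cons_cons, flatten_cons, flatten_cons, length_append, length_append,
      length_annotateLast (hB b mem_cons_self), ih]

lemma mem_replicateAnnotation {B : List (List (List α))} {a : List (List α)} {x : List α}
    (hx : x ∈ replicateAnnotation B a) : x ∈ a ∨ x = [] := by
  obtain ⟨_, hblock, hx⟩ := mem_flatten.1 hx
  obtain ⟨i, hi, rfl⟩ := mem_iff_getElem.1 hblock
  simp only [getElem_zipWith, annotateLast, mem_append, mem_singleton] at hx
  obtain hx | rfl := hx
  · exact .inr (eq_of_mem_replicate hx)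
  · exact .inl (getElem_mem _)

lemma annotatedPrompt_replicateAnnotation {B : List (List (List α))} (hB : ∀ b ∈ B, b ≠ [])
    (a : List (List α)) :
    annotatedPrompt B.flatten (replicateAnnotation B a) = annotatedPrompt (B.map flatten) a := by
  induction B generalizing a with
  | nil => simp [replicateAnnotation, annotatedPrompt]
  | cons b B ih =>
    obtain _ | ⟨x, a⟩ := a
    · simp [replicateAnnotation]
    have hb := hB b mem_cons_self
    have hBtail : ∀ b ∈ B, b ≠ [] := fun b' hb' => hB b' (mem_cons_of_mem _ hb')
    have ih := ih hBtail a
    simp only [replicateAnnotation] at ih ⊢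
    rw [flatten_cons, zipWith_cons_cons, flatten_cons,
      annotatedPrompt_append _ _ (length_annotateLast hb x).symm, annotatedPrompt_annotateLast hb,
      ih, map_cons, annotatedPrompt_cons_cons]

end

theorem replication_over_refinement_general {α : Type*}
    (S₁ : List (List α))
    (S₂ : List (List α))
    (B : List (List (List α))) (hBne : ∀ b ∈ B, b ≠ [])
    (hBmap : B.map List.flatten = S₁) (hBjoin : B.flatten = S₂)
    (a : List (List α)) (ha : a.length = S₁.length) :
    ∃ a' : List (List α), a'.length = S₂.length ∧
      (∀ x ∈ a', x ∈ a ∨ x = ([] : List α)) ∧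
      annotatedPrompt S₂ a' = annotatedPrompt S₁ a := by
  subst hBmap hBjoin
  refine ⟨replicateAnnotation B a, ?_, fun _ => mem_replicateAnnotation, ?_⟩
  · exact length_replicateAnnotation hBne (by simpa using ha)
  · exact annotatedPrompt_replicateAnnotation hBne a

/-- **Replication construction (proof of Theorem 3).**  Let `S₁` be a segmentation
of `P` and let `S₂` be a segmentation of `P` refining `S₁`:  `S₂ = b₁ ++ ⋯ ++ b_k`
for nonempty blocks `b_i` of segments with `(b_i).flatten = t_i`, the `i`-th segment
of `S₁`.  Then every annotation assignment `a` for `S₁` can be replicated over `S₂`: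
there is an assignment `a'` for `S₂` using only the values of `a` and the empty list
such that `J(S₂, a') = J(S₁, a)` (assign `a_i` to the last subsegment of block `b_i`
and the empty annotation to all other subsegments). -/
theorem replication_over_refinement {α : Type*} (P : List α)
    (S₁ : List (List α)) (hS₁ : IsSegmentation S₁ P)
    (S₂ : List (List α)) (hS₂ : IsSegmentation S₂ P)
    (B : List (List (List α))) (hBne : ∀ b ∈ B, b ≠ [])
    (hBmap : B.map List.flatten = S₁) (hBjoin : B.flatten = S₂)
    (a : List (List α)) (ha : a.length = S₁.length) :
    ∃ a' : List (List α), a'.length = S₂.length ∧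
      (∀ x ∈ a', x ∈ a ∨ x = ([] : List α)) ∧
      annotatedPrompt S₂ a' = annotatedPrompt S₁ a :=
  replication_over_refinement_general S₁ S₂ B hBne hBmap hBjoin a ha
end

section
/- Let α be a type, let V be a finite set of lists over α containing the empty list, let P be a list over α, and let S₁ and S₂ be segmentations of P such that S₂ refines S₁ (each segment of S₁ is the concatenation of a consecutive block of segments of S₂). Then for every function q : List α → ℝ, the maximum of q(J(S₂, a)) over all annotation assignments a for S₂ with values in V is at least the maximum of q(J(S₁, a)) over all annotation assignments a for S₁ with values in V. (Concrete form of Theorem 3, Improvement with Finer Segmentation.) -/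
/-- The annotated prompt `J(σ, a) = s₁ ++ a₁ ++ s₂ ++ a₂ ++ ⋯ ++ sₙ ++ aₙ`,
where the annotation assignment is given as a function on segment positions. -/
def annotatedPromptFn {α : Type*} (σ : List (List α)) (a : Fin σ.length → List α) :
    List α :=
  (List.ofFn fun i => σ.get i ++ a i).flatten

def J2 {α : Type*} : List (List α) → List (List α) → List α
  | [], _ => []
  | _ :: _, [] => []
  | s :: σ, x :: as => s ++ x ++ J2 σ as

theorem annotatedPromptFn_eq_J2 {α : Type*} (σ : List (List α))
    (a : Fin σ.length → List α) :
    (List.ofFn fun i => σ.get i ++ a i).flatten = J2 σ (List.ofFn a) := by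
  induction σ with
  | nil => simp [J2]
  | cons s σ ih =>
    rw [List.ofFn_succ, List.ofFn_succ]
    simp only [List.flatten_cons, List.get_cons_succ, List.get_cons_zero]
    have h1 : (List.ofFn fun i : Fin σ.length => (s :: σ).get i.succ ++ a i.succ)
        = List.ofFn fun i => σ.get i ++ a i.succ := rfl
    rw [h1, ih (fun i => a i.succ)]
    simp [J2]

theorem J2_append {α : Type*} : ∀ (σ₁ a₁ σ₂ a₂ : List (List α)),
    σ₁.length = a₁.length →
    J2 (σ₁ ++ σ₂) (a₁ ++ a₂) = J2 σ₁ a₁ ++ J2 σ₂ a₂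
  | [], [], σ₂, a₂, _ => by simp [J2]
  | s :: σ₁, x :: a₁, σ₂, a₂, h => by
    simp only [List.cons_append, J2, List.append_assoc, List.append_eq]
    rw [J2_append σ₁ a₁ σ₂ a₂ (by simpa using h)]

def blockAnn {α : Type*} (b : List (List α)) (x : List α) : List (List α) :=
  List.replicate (b.length - 1) [] ++ [x]

theorem blockAnn_length {α : Type*} (b : List (List α)) (hb : b ≠ []) (x : List α) :
    (blockAnn b x).length = b.length := by
  have : 1 ≤ b.length := List.length_pos_iff.mpr hb
  simp [blockAnn]; omega

theorem J2_blockAnn {α : Type*} : ∀ (b : List (List α)), b ≠ [] → ∀ (x : List α),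
    J2 b (blockAnn b x) = b.flatten ++ x
  | [], h, x => absurd rfl h
  | [s], _, x => by simp [blockAnn, J2]
  | s :: t :: rest, _, x => by
    have ih := J2_blockAnn (t :: rest) (by simp) x
    simp only [blockAnn, List.length_cons] at ih ⊢
    simp only [Nat.add_sub_cancel] at ih ⊢
    rw [List.replicate_succ]
    simp only [List.cons_append, J2, List.append_eq]
    rw [ih]
    simp

theorem J2_flatten {α : Type*} : ∀ (B : List (List (List α))) (as : List (List α)),
    B.length = as.length → (∀ b ∈ B, b ≠ []) →
    J2 B.flatten (((B.zip as).map fun p => blockAnn p.1 p.2).flatten)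
      = J2 (B.map List.flatten) as
  | [], [], _, _ => by simp [J2]
  | b :: B, x :: as, h, hne => by
    simp only [List.flatten_cons, List.zip_cons_cons, List.map_cons, List.map_cons, J2]
    rw [J2_append b (blockAnn b x) _ _
      (blockAnn_length b (hne b (by simp)) x).symm,
      J2_blockAnn b (hne b (by simp)) x,
      J2_flatten B as (by simpa using h) (fun c hc => hne c (by simp [hc]))]


theorem zipAnn_length {α : Type*} : ∀ (B : List (List (List α))) (as : List (List α)),
    B.length = as.length → (∀ b ∈ B, b ≠ []) →
    (((B.zip as).map fun p => blockAnn p.1 p.2).flatten).length = B.flatten.length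
  | [], [], _, _ => rfl
  | b :: B, x :: as, h, hne => by
    simp only [List.zip_cons_cons, List.map_cons, List.flatten_cons, List.length_append]
    rw [blockAnn_length b (hne b (by simp)) x,
      zipAnn_length B as (by simpa using h) (fun c hc => hne c (by simp [hc]))]

/-- **Theorem 3 (Improvement with Finer Segmentation), concrete form.**
Let `V` be a finite set of lists over `α` containing the empty list, and let `S₁`,
`S₂` be segmentations of `P` such that `S₂` refines `S₁` (each segment of `S₁` is
the concatenation of a consecutive nonempty block of segments of `S₂`).  Then, for
every `q : List α → ℝ`, the maximum of `q (J(S₂, a))` over all annotation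
assignments `a` for `S₂` with values in `V` is at least the maximum of
`q (J(S₁, a))` over all annotation assignments `a` for `S₁` with values in `V`. -/
theorem finer_segmentation_improves_concrete {α : Type*}
    (V : Finset (List α)) (hV : ([] : List α) ∈ V)
    (P : List α) (S₁ S₂ : List (List α))
    (hS₁ : IsSegmentation S₁ P) (hS₂ : IsSegmentation S₂ P)
    (B : List (List (List α))) (hBne : ∀ b ∈ B, b ≠ [])
    (hBmap : B.map List.flatten = S₁) (hBjoin : B.flatten = S₂)
    (q : List α → ℝ) :
    (⨆ a : Fin S₁.length → ↥V, q (annotatedPromptFn S₁ fun i => (a i : List α))) ≤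
      ⨆ a : Fin S₂.length → ↥V, q (annotatedPromptFn S₂ fun i => (a i : List α)) := by
  have hVne : Nonempty ↥V := ⟨⟨[], hV⟩⟩
  apply ciSup_le
  intro a
  set as₁ : List (List α) := List.ofFn (fun i => (a i : List α)) with has₁
  have hlen₁ : B.length = as₁.length := by simp [has₁, ← hBmap]
  set L : List (List α) := ((B.zip as₁).map fun p => blockAnn p.1 p.2).flatten with hL
  have hLmem : ∀ y ∈ L, y ∈ V := by
    intro y hy
    rw [hL, List.mem_flatten] at hy
    obtain ⟨l, hl, hyl⟩ := hy
    rw [List.mem_map] at hl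
    obtain ⟨p, hp, rfl⟩ := hl
    simp only [blockAnn, List.mem_append] at hyl
    rcases hyl with h | h
    · rw [List.eq_of_mem_replicate h]; exact hV
    · obtain rfl : y = p.2 := by simpa using h
      have h2 := (List.of_mem_zip hp).2
      rw [has₁, List.mem_ofFn] at h2
      obtain ⟨i, hi⟩ := h2
      rw [← hi]
      exact (a i).2
  have hLlen : L.length = S₂.length := by
    rw [hL, zipAnn_length B as₁ hlen₁ hBne, hBjoin]
  let a₂ : Fin S₂.length → ↥V := fun i =>
    ⟨L.get (Fin.cast hLlen.symm i), hLmem _ (by apply List.get_mem)⟩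
  have hofn : (List.ofFn fun i => (a₂ i : List α)) = L := by
    apply List.ext_get
    · simp [hLlen]
    · intro n h1 h2
      simp [a₂]
  have key : annotatedPromptFn S₂ (fun i => (a₂ i : List α))
      = annotatedPromptFn S₁ (fun i => (a i : List α)) := by
    unfold annotatedPromptFn
    rw [annotatedPromptFn_eq_J2, annotatedPromptFn_eq_J2, hofn, ← hBjoin, hL,
      J2_flatten B as₁ hlen₁ hBne, hBmap]
  rw [← key]
  exact le_ciSup (Set.Finite.bddAbove (Set.finite_range
    (fun a : Fin S₂.length → ↥V => q (annotatedPromptFn S₂ fun i => (a i : List α))))) a₂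
end
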